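/- arXiv:2509.05102 — 2 statements merged into one kernel-verified Lean document; each statement's English description precedes it below -/
import Mathlib

section
/- Let 1 ≤ r < k ≤ n be integers and let S be an r-element subset of Fin n. Then the number of ordered pairs (e, e′) of k-element subsets of Fin n with e ≠ e′, S ⊆ e, S ⊆ e′, and |e ∩ e′| > r is at most C(n−r, k−r) · (C(n−r, k−r) − C(n−k, k−r)). -/
open Finset

theorem stmt7_aux_all (n k r : ℕ) (S : Finset (Fin n)) (hS : S.card = r) (hrk : r ≤ k) :
    (Finset.univ.filter fun e : Finset (Fin n) => e.card = k ∧ S ⊆ e).card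
      ≤ (n - r).choose (k - r) := by
  classical
  have h : (Finset.univ.filter fun e : Finset (Fin n) => e.card = k ∧ S ⊆ e).card
      ≤ (Sᶜ.powersetCard (k - r)).card := by
    apply Finset.card_le_card_of_injOn (fun e => e \ S)
    · intro e he
      simp only [mem_coe, mem_filter, mem_univ, true_and] at he
      rw [mem_coe, mem_powersetCard]
      constructor
      · intro x hx
        simp only [mem_sdiff] at hx
        simpa [mem_compl] using hx.2
      · rw [card_sdiff_of_subset he.2, he.1, hS]
    · intro a ha b hb hab
      simp only [coe_filter, Set.mem_setOf_eq, mem_univ, true_and] at ha hb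
      have := congrArg (· ∪ S) hab
      simpa [sdiff_union_of_subset ha.2, sdiff_union_of_subset hb.2] using this
  rwa [card_powersetCard, card_compl, Fintype.card_fin, hS] at h

/-- Counting bound for pairs of overlapping hyperedges: the number of ordered pairs
`(e, e′)` of distinct `k`-subsets containing the `r`-set `S` with `|e ∩ e′| > r` is
at most `C(n−r,k−r) · (C(n−r,k−r) − C(n−k,k−r))`. -/
theorem stmt7 (n k r : ℕ) (hr : 1 ≤ r) (hrk : r < k) (hkn : k ≤ n)
    (S : Finset (Fin n)) (hS : S.card = r) :
    (Finset.univ.filter fun pe : Finset (Fin n) × Finset (Fin n) =>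
        pe.1.card = k ∧ pe.2.card = k ∧ pe.1 ≠ pe.2 ∧
        S ⊆ pe.1 ∧ S ⊆ pe.2 ∧ r < (pe.1 ∩ pe.2).card).card
      ≤ (n - r).choose (k - r) * ((n - r).choose (k - r) - (n - k).choose (k - r)) := by
  classical
  set c1 := (n - r).choose (k - r) with hc1
  set c2 := (n - k).choose (k - r) with hc2
  set T := (Finset.univ.filter fun pe : Finset (Fin n) × Finset (Fin n) =>
        pe.1.card = k ∧ pe.2.card = k ∧ pe.1 ≠ pe.2 ∧
        S ⊆ pe.1 ∧ S ⊆ pe.2 ∧ r < (pe.1 ∩ pe.2).card) with hT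
  set A := (Finset.univ.filter fun e : Finset (Fin n) => e.card = k ∧ S ⊆ e) with hA
  have hAcard : A.card ≤ c1 := stmt7_aux_all n k r S hS hrk.le
  -- fiberwise decomposition
  have hmem : ∀ p ∈ T, p.1 ∈ A := by
    intro p hp
    simp only [hT, mem_filter, mem_univ, true_and] at hp
    simp only [hA, mem_filter, mem_univ, true_and]
    exact ⟨hp.1, hp.2.2.2.1⟩
  have hsum : T.card = ∑ e ∈ A, (T.filter fun p => p.1 = e).card :=
    Finset.card_eq_sum_card_fiberwise hmem
  -- per-fiber bound
  have hfiber : ∀ e ∈ A, (T.filter fun p => p.1 = e).card ≤ c1 - c2 := by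
    intro e heA
    simp only [hA, mem_filter, mem_univ, true_and] at heA
    obtain ⟨hek, hSe⟩ := heA
    -- B e : candidate second coordinates
    set B := (Finset.univ.filter fun e' : Finset (Fin n) =>
        e'.card = k ∧ S ⊆ e' ∧ r < (e ∩ e').card) with hB
    have h1 : (T.filter fun p => p.1 = e).card ≤ B.card := by
      apply Finset.card_le_card_of_injOn Prod.snd
      · intro p hp
        simp only [hT, mem_coe, mem_filter, mem_univ, true_and] at hp
        obtain ⟨⟨_, h2, _, _, h5, h6⟩, hp1⟩ := hp
        simp only [hB, mem_coe, mem_filter, mem_univ, true_and]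
        exact ⟨h2, h5, by rwa [hp1] at h6⟩
      · intro p hp q hq hpq
        simp only [mem_coe, mem_filter] at hp hq
        exact Prod.ext (hp.2.trans hq.2.symm) hpq
    -- Avoid : e' containing S, disjoint from e \ S
    set Av := (Finset.univ.filter fun e' : Finset (Fin n) =>
        e'.card = k ∧ S ⊆ e' ∧ e' ∩ (e \ S) = ∅) with hAv
    set All := (Finset.univ.filter fun e' : Finset (Fin n) =>
        e'.card = k ∧ S ⊆ e') with hAll
    have hAvAll : Av ⊆ All := by
      intro x hx
      simp only [hAv, mem_filter, mem_univ, true_and] at hx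
      simp only [hAll, mem_filter, mem_univ, true_and]
      exact ⟨hx.1, hx.2.1⟩
    have hBsub : B ⊆ All \ Av := by
      intro x hx
      simp only [hB, mem_filter, mem_univ, true_and] at hx
      obtain ⟨hxk, hSx, hrx⟩ := hx
      rw [mem_sdiff]
      refine ⟨by simp only [hAll, mem_filter, mem_univ, true_and]; exact ⟨hxk, hSx⟩, ?_⟩
      simp only [hAv, mem_filter, mem_univ, true_and]
      rintro ⟨-, -, hdisj⟩
      -- then e ∩ x = S, card = r, contradiction
      have hsub : e ∩ x ⊆ S := by
        intro y hy
        by_contra hyS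
        have : y ∈ x ∩ (e \ S) := by
          simp only [mem_inter, mem_sdiff]
          exact ⟨(mem_inter.mp hy).2, (mem_inter.mp hy).1, hyS⟩
        rw [hdisj] at this
        exact absurd this (notMem_empty y)
      have hsub' : S ⊆ e ∩ x := subset_inter hSe hSx
      have : (e ∩ x).card = r := by
        rw [Finset.Subset.antisymm hsub hsub', hS]
      omega
    -- card of Av ≥ c2
    have hAvcard : c2 ≤ Av.card := by
      have h : (eᶜ.powersetCard (k - r)).card ≤ Av.card := by
        apply Finset.card_le_card_of_injOn (fun t => t ∪ S)
        · intro t ht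
          rw [mem_coe, mem_powersetCard] at ht
          obtain ⟨hte, htc⟩ := ht
          have htS : Disjoint t S := by
            refine Finset.disjoint_left.mpr fun y hy hyS => ?_
            have := hte hy
            simp only [mem_compl] at this
            exact this (hSe hyS)
          simp only [hAv, mem_coe, mem_filter, mem_univ, true_and]
          refine ⟨?_, subset_union_right, ?_⟩
          · rw [card_union_of_disjoint htS, htc, hS]
            omega
          · apply Finset.eq_empty_of_forall_notMem
            intro y hy
            simp only [mem_inter, mem_union, mem_sdiff] at hy
            obtain ⟨hy1, hy2, hy3⟩ := hy
            rcases hy1 with hyt | hyS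
            · have := hte hyt
              simp only [mem_compl] at this
              exact this hy2
            · exact hy3 hyS
        · intro a ha b hb hab
          rw [mem_coe, mem_powersetCard] at ha hb
          have hda : Disjoint a S := Finset.disjoint_left.mpr fun y hy hyS => by
            have := ha.1 hy; simp only [mem_compl] at this; exact this (hSe hyS)
          have hdb : Disjoint b S := Finset.disjoint_left.mpr fun y hy hyS => by
            have := hb.1 hy; simp only [mem_compl] at this; exact this (hSe hyS)
          have := congrArg (· \ S) hab
          simpa [union_sdiff_distrib, sdiff_eq_self_of_disjoint hda,
            sdiff_eq_self_of_disjoint hdb] using this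
      rwa [card_powersetCard, card_compl, Fintype.card_fin, hek] at h
    have hAllcard : All.card ≤ c1 := stmt7_aux_all n k r S hS hrk.le
    calc (T.filter fun p => p.1 = e).card ≤ B.card := h1
      _ ≤ (All \ Av).card := Finset.card_le_card hBsub
      _ = All.card - Av.card := Finset.card_sdiff_of_subset hAvAll
      _ ≤ c1 - c2 := tsub_le_tsub hAllcard hAvcard
  calc T.card = ∑ e ∈ A, (T.filter fun p => p.1 = e).card := hsum
    _ ≤ ∑ _e ∈ A, (c1 - c2) := Finset.sum_le_sum hfiber
    _ = A.card * (c1 - c2) := by rw [Finset.sum_const, smul_eq_mul]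
    _ ≤ c1 * (c1 - c2) := Nat.mul_le_mul_right _ hAcard
end

section
/- Fix integers 1 ≤ r < k ≤ n and p ∈ [0,1], and let S be an r-element subset of Fin n. Then the probability that there exist two distinct hyperedges e and e′ of ω with S ⊆ e, S ⊆ e′, and |e ∩ e′| > r is at most C(n−r, k−r) · (C(n−r, k−r) − C(n−k, k−r)) · p². -/
open MeasureTheory

/-- The Bernoulli(p) measure on `Bool`. -/
noncomputable def bernoulliMeasure (p : ℝ) : Measure Bool :=
  (ENNReal.ofReal p) • Measure.dirac true + (ENNReal.ofReal (1 - p)) • Measure.dirac false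

/-- The law of the `k`-uniform random hypergraph `H(n,k,p)`. -/
noncomputable def hypMeasure (n k : ℕ) (p : ℝ) :
    Measure ({e : Finset (Fin n) // e.card = k} → Bool) :=
  Measure.pi fun _ => bernoulliMeasure p

lemma bern_true (p : ℝ) : bernoulliMeasure p {true} = ENNReal.ofReal p := by
  simp [bernoulliMeasure]

lemma bern_prob (p : ℝ) (hp0 : 0 ≤ p) (hp1 : p ≤ 1) :
    IsProbabilityMeasure (bernoulliMeasure p) := by
  constructor
  simp [bernoulliMeasure]
  rw [← ENNReal.ofReal_add hp0 (by linarith)]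
  simp

lemma pair_meas (n k : ℕ) (p : ℝ) (hp0 : 0 ≤ p) (hp1 : p ≤ 1)
    (e e' : {e : Finset (Fin n) // e.card = k}) (hne : e ≠ e') :
    hypMeasure n k p {ω | ω e = true ∧ ω e' = true} = (ENNReal.ofReal p) ^ 2 := by
  haveI := bern_prob p hp0 hp1
  have hset : {ω : {e : Finset (Fin n) // e.card = k} → Bool | ω e = true ∧ ω e' = true}
      = Set.univ.pi (fun i => if i = e ∨ i = e' then ({true} : Set Bool) else Set.univ) := by
    ext ω
    simp only [Set.mem_setOf_eq, Set.mem_pi, Set.mem_univ, forall_true_left]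
    constructor
    · rintro ⟨h1, h2⟩ i
      split_ifs with h
      · rcases h with h | h <;> subst h <;> simpa
      · trivial
    · intro h
      constructor
      · have := h e; simp at this; simpa using this
      · have := h e'; simp at this; simpa using this
  rw [hypMeasure, hset, Measure.pi_pi]
  have : ∀ i ∉ ({e, e'} : Finset _), bernoulliMeasure p
      (if i = e ∨ i = e' then ({true} : Set Bool) else Set.univ) = 1 := by
    intro i hi
    simp only [Finset.mem_insert, Finset.mem_singleton] at hi
    push_neg at hi
    rw [if_neg (by tauto)]
    exact measure_univ
  rw [← Finset.prod_subset (Finset.subset_univ ({e, e'} : Finset _)) (fun i _ hi => this i hi),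
    Finset.prod_pair hne]
  simp [bern_true, sq]
variable (n k r : ℕ) (S : Finset (Fin n))

-- E : sets of card k containing S
noncomputable def Eset (n k : ℕ) (S : Finset (Fin n)) : Finset {e : Finset (Fin n) // e.card = k} :=
  Finset.univ.filter (fun e => S ⊆ e.val)

lemma Eset_card (hrk : r ≤ k) (hS : S.card = r) :
    (Eset n k S).card ≤ (n - r).choose (k - r) := by
  have h1 : ((Finset.univ \ S).powersetCard (k - r)).card = (n - r).choose (k - r) := by
    rw [Finset.card_powersetCard, Finset.card_sdiff_of_subset (Finset.subset_univ S)]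
    simp [hS]
  rw [← h1]
  apply Finset.card_le_card_of_injOn (fun e => e.val \ S)
  · intro e he
    simp only [Eset, Finset.mem_coe, Finset.mem_filter] at he
    rw [Finset.mem_coe, Finset.mem_powersetCard]
    constructor
    · exact Finset.sdiff_subset_sdiff (Finset.subset_univ _) le_rfl
    · rw [Finset.card_sdiff_of_subset he.2, e.2, hS]
  · intro e he e' he' hee
    simp only [Eset, Finset.coe_filter, Finset.mem_univ, true_and, Set.mem_setOf_eq] at he he'
    apply Subtype.ext
    have h2 : (e.val \ S) ∪ S = (e'.val \ S) ∪ S := by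
      rw [show (e.val \ S : Finset (Fin n)) = e'.val \ S from hee]
    rwa [Finset.sdiff_union_of_subset he, Finset.sdiff_union_of_subset he'] at h2

lemma good_card (hrk : r ≤ k) (hkn : k ≤ n) (hS : S.card = r)
    (e : {e : Finset (Fin n) // e.card = k}) (he : S ⊆ e.val) :
    (n - k).choose (k - r) ≤
      ((Eset n k S).filter (fun e' => e'.val ∩ e.val = S)).card := by
  set G := (Eset n k S).filter (fun e' => e'.val ∩ e.val = S) with hG
  have hsub : (Finset.univ \ e.val).powersetCard (k - r) ⊆ G.image (fun e' => e'.val \ S) := by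
    intro X hX
    rw [Finset.mem_powersetCard] at hX
    obtain ⟨hX1, hX2⟩ := hX
    have hXe : ∀ x ∈ X, x ∉ e.val := fun x hx => (Finset.mem_sdiff.mp (hX1 hx)).2
    have hdisj : Disjoint S X := by
      rw [Finset.disjoint_left]
      intro a ha haX
      exact hXe a haX (he ha)
    have hcard : (S ∪ X).card = k := by
      rw [Finset.card_union_of_disjoint hdisj, hS, hX2]
      omega
    refine Finset.mem_image.mpr ⟨⟨S ∪ X, hcard⟩, ?_, ?_⟩
    · simp only [hG, Eset, Finset.mem_filter, Finset.mem_univ, true_and]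
      constructor
      · exact Finset.subset_union_left
      · ext x
        simp only [Finset.mem_inter, Finset.mem_union]
        constructor
        · rintro ⟨hx1 | hx1, hx2⟩
          · exact hx1
          · exact absurd hx2 (hXe x hx1)
        · intro hx; exact ⟨Or.inl hx, he hx⟩
    · simp only
      rw [Finset.union_sdiff_cancel_left hdisj]
  calc (n - k).choose (k - r)
      = ((Finset.univ \ e.val).powersetCard (k - r)).card := by
        rw [Finset.card_powersetCard, Finset.card_sdiff_of_subset (Finset.subset_univ _), e.2]
        simp
    _ ≤ (G.image (fun e' => e'.val \ S)).card := Finset.card_le_card hsub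
    _ ≤ G.card := Finset.card_image_le

lemma bad_card (hrk : r < k) (hkn : k ≤ n) (hS : S.card = r)
    (e : {e : Finset (Fin n) // e.card = k}) (he : S ⊆ e.val) :
    ((Eset n k S).filter (fun e' => r < (e.val ∩ e'.val).card)).card ≤
      (n - r).choose (k - r) - (n - k).choose (k - r) := by
  set G := (Eset n k S).filter (fun e' => e'.val ∩ e.val = S) with hG
  have hsub : (Eset n k S).filter (fun e' => r < (e.val ∩ e'.val).card) ⊆ Eset n k S \ G := by
    intro e' he'
    rw [Finset.mem_filter] at he'
    rw [Finset.mem_sdiff]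
    refine ⟨he'.1, ?_⟩
    simp only [hG, Finset.mem_filter]
    rintro ⟨-, heq⟩
    rw [Finset.inter_comm, heq, hS] at he'
    exact lt_irrefl r he'.2
  calc ((Eset n k S).filter (fun e' => r < (e.val ∩ e'.val).card)).card
      ≤ (Eset n k S \ G).card := Finset.card_le_card hsub
    _ = (Eset n k S).card - G.card := Finset.card_sdiff_of_subset (Finset.filter_subset _ _)
    _ ≤ (n - r).choose (k - r) - (n - k).choose (k - r) :=
        tsub_le_tsub (Eset_card n k r S hrk.le hS) (good_card n k r S hrk.le hkn hS e he)


/-- Union-bound estimate: the probability that two distinct hyperedges of `ω` both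
contain the `r`-set `S` and intersect in more than `r` vertices is at most
`C(n−r,k−r) · (C(n−r,k−r) − C(n−k,k−r)) · p²`. -/
theorem stmt8 (n k r : ℕ) (hr : 1 ≤ r) (hrk : r < k) (hkn : k ≤ n)
    (p : ℝ) (hp0 : 0 ≤ p) (hp1 : p ≤ 1)
    (S : Finset (Fin n)) (hS : S.card = r) :
    hypMeasure n k p
        {ω | ∃ e e' : {e : Finset (Fin n) // e.card = k},
              e ≠ e' ∧ ω e = true ∧ ω e' = true ∧
              S ⊆ e.val ∧ S ⊆ e'.val ∧ r < (e.val ∩ e'.val).card}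
      ≤ ENNReal.ofReal
          (((n - r).choose (k - r) : ℝ)
            * (((n - r).choose (k - r) : ℝ) - ((n - k).choose (k - r) : ℝ)) * p ^ 2) := by
  classical
  set Cr := (n - r).choose (k - r) with hCr
  set Ck := (n - k).choose (k - r) with hCk
  have hle : Ck ≤ Cr := Nat.choose_le_choose _ (by omega)
  set T := ((Eset n k S) ×ˢ (Eset n k S)).filter
      (fun q => q.1 ≠ q.2 ∧ r < (q.1.val ∩ q.2.val).card) with hT
  -- step 1: event is contained in the union over T
  have hsub : {ω : {e : Finset (Fin n) // e.card = k} → Bool |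
        ∃ e e' : {e : Finset (Fin n) // e.card = k},
          e ≠ e' ∧ ω e = true ∧ ω e' = true ∧
          S ⊆ e.val ∧ S ⊆ e'.val ∧ r < (e.val ∩ e'.val).card}
      ⊆ ⋃ q ∈ T, {ω | ω q.1 = true ∧ ω q.2 = true} := by
    rintro ω ⟨e, e', hne, h1, h2, hs1, hs2, hcard⟩
    refine Set.mem_biUnion (show (e, e') ∈ T from ?_) ⟨h1, h2⟩
    simp only [hT, Finset.mem_filter, Finset.mem_product, Eset, Finset.mem_univ, true_and]
    exact ⟨⟨hs1, hs2⟩, hne, hcard⟩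
  -- step 2: union bound
  calc hypMeasure n k p _
      ≤ hypMeasure n k p (⋃ q ∈ T, {ω | ω q.1 = true ∧ ω q.2 = true}) := measure_mono hsub
    _ ≤ ∑ q ∈ T, hypMeasure n k p {ω | ω q.1 = true ∧ ω q.2 = true} :=
        measure_biUnion_finset_le T _
    _ = ∑ q ∈ T, (ENNReal.ofReal p) ^ 2 := by
        apply Finset.sum_congr rfl
        intro q hq
        simp only [hT, Finset.mem_filter] at hq
        exact pair_meas n k p hp0 hp1 q.1 q.2 hq.2.1
    _ = (T.card : ENNReal) * (ENNReal.ofReal p) ^ 2 := by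
        rw [Finset.sum_const, nsmul_eq_mul]
    _ ≤ ((Cr * (Cr - Ck) : ℕ) : ENNReal) * (ENNReal.ofReal p) ^ 2 := by
        gcongr
        have hTcard : T.card ≤ Cr * (Cr - Ck) := by
          have hbi : T ⊆ (Eset n k S).biUnion (fun e =>
              ((Eset n k S).filter (fun e' => r < (e.val ∩ e'.val).card)).image
                (fun e' => (e, e'))) := by
            intro q hq
            simp only [hT, Finset.mem_filter, Finset.mem_product] at hq
            rw [Finset.mem_biUnion]
            exact ⟨q.1, hq.1.1, Finset.mem_image.mpr ⟨q.2,
              Finset.mem_filter.mpr ⟨hq.1.2, hq.2.2⟩, rfl⟩⟩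
          calc T.card ≤ _ := Finset.card_le_card hbi
            _ ≤ ∑ e ∈ Eset n k S,
                (((Eset n k S).filter (fun e' => r < (e.val ∩ e'.val).card)).image
                  (fun e' => (e, e'))).card := Finset.card_biUnion_le
            _ ≤ ∑ _e ∈ Eset n k S, (Cr - Ck) := by
                apply Finset.sum_le_sum
                intro e he
                refine le_trans Finset.card_image_le ?_
                have heS : S ⊆ e.val := by
                  simpa [Eset] using he
                exact bad_card n k r S hrk hkn hS e heS
            _ = (Eset n k S).card * (Cr - Ck) := by
                rw [Finset.sum_const, smul_eq_mul]
            _ ≤ Cr * (Cr - Ck) :=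
                Nat.mul_le_mul_right _ (Eset_card n k r S hrk.le hS)
        exact_mod_cast hTcard
    _ = ENNReal.ofReal (((Cr * (Cr - Ck) : ℕ) : ℝ) * p ^ 2) := by
        rw [ENNReal.ofReal_mul (by positivity), ← ENNReal.ofReal_pow hp0,
          ENNReal.ofReal_natCast]
    _ = ENNReal.ofReal ((Cr : ℝ) * ((Cr : ℝ) - (Ck : ℝ)) * p ^ 2) := by
        congr 1
        rw [Nat.cast_mul, Nat.cast_sub hle]
end
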